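/- arXiv:2004.01412 — 7 statements merged into one kernel-verified Lean document; each statement's English description precedes it below -/
import Mathlib

section
/- The function f(x) = 2·csc(π/x) + 2·csc(π/(n−x)) is decreasing on the interval [2, n/2], for any real n > 4. -/
open Real Set

/-!
Write `g t = csc (π / t)`. The function is `2 (g x + g (n - x))`, whose derivative
`2 (g' x - g' (n - x))` is negative when `x < n - x`, provided `g'` is strictly increasing.
With `u = π / t` one has `π g' t = u² cos u / sin² u`, and this decreases on `(0, π)` since its
derivative has the sign of `2 sin u cos u - u (1 + cos² u) < 0` (from `sin u < u` and
`2 cos u ≤ 1 + cos² u`).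
-/

theorem two_mul_sin_mul_cos_lt {u : ℝ} (hu : 0 < u) : 2 * sin u * cos u < u * (1 + cos u ^ 2) := by
  have hsc := sin_sq_add_cos_sq u
  rcases lt_or_ge u 1 with hu1 | hu1
  · have hcos : 0 < cos u := cos_pos_of_mem_Ioo ⟨by linarith [pi_pos], by linarith [pi_gt_three]⟩
    have hsin : sin u < u := sin_lt hu
    nlinarith [sq_nonneg (1 - cos u), mul_lt_mul_of_pos_right hsin hcos]
  -- `2 sin u cos u ≤ 1 ≤ u`, and equality throughout would force `cos u = 0`
  · nlinarith [sq_nonneg (sin u - cos u), sq_nonneg (cos u), sq_nonneg (sin u)]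

theorem hasDerivAt_sq_mul_cos_div_sin_sq {u : ℝ} (hu : sin u ≠ 0) :
    HasDerivAt (fun v => v ^ 2 * cos v / sin v ^ 2)
      (-(u * (u * (1 + cos u ^ 2) - 2 * sin u * cos u)) / sin u ^ 3) u := by
  refine (((hasDerivAt_pow 2 u).mul (hasDerivAt_cos u)).div
    ((hasDerivAt_sin u).pow 2) (pow_ne_zero 2 hu)).congr_deriv ?_
  simp only [Pi.pow_apply, Pi.mul_apply]
  field_simp
  linear_combination (-(u ^ 2 * sin u)) * sin_sq_add_cos_sq u

theorem strictAntiOn_sq_mul_cos_div_sin_sq :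
    StrictAntiOn (fun u => u ^ 2 * cos u / sin u ^ 2) (Ioo 0 π) := by
  have hderiv : ∀ u ∈ Ioo 0 π, HasDerivAt (fun v => v ^ 2 * cos v / sin v ^ 2)
      (-(u * (u * (1 + cos u ^ 2) - 2 * sin u * cos u)) / sin u ^ 3) u :=
    fun u hu => hasDerivAt_sq_mul_cos_div_sin_sq (sin_pos_of_mem_Ioo hu).ne'
  refine strictAntiOn_of_hasDerivWithinAt_neg (convex_Ioo 0 π)
    (fun u hu => (hderiv u hu).continuousAt.continuousWithinAt)
    (fun u hu => (hderiv u (interior_subset hu)).hasDerivWithinAt) (fun u hu => ?_)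
  rw [interior_Ioo] at hu
  have hsin := sin_pos_of_mem_Ioo hu
  have hnum := mul_pos hu.1 (sub_pos.2 (two_mul_sin_mul_cos_lt hu.1))
  exact div_neg_of_neg_of_pos (neg_neg_of_pos hnum) (by positivity)

theorem pi_div_mem_Ioo {t : ℝ} (ht : 1 < t) : π / t ∈ Ioo 0 π :=
  ⟨by have := pi_pos; positivity, div_lt_self pi_pos ht⟩

theorem hasDerivAt_one_div_sin_pi_div {t : ℝ} (ht : sin (π / t) ≠ 0) :
    HasDerivAt (fun x => 1 / sin (π / x)) ((π / t) ^ 2 * cos (π / t) / sin (π / t) ^ 2 / π) t := by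
  have ht0 : t ≠ 0 := by rintro rfl; simp at ht
  have h := ((hasDerivAt_sin _).comp t ((hasDerivAt_inv ht0).const_mul π)).inv ht
  simp only [one_div, ← div_eq_mul_inv, Function.comp_def] at h ⊢
  refine h.congr_deriv ?_
  field_simp

theorem strictMonoOn_sq_mul_cos_div_sin_sq_pi_div :
    StrictMonoOn (fun t => (π / t) ^ 2 * cos (π / t) / sin (π / t) ^ 2 / π) (Ioi 1) :=
  fun _ hx _ hy hxy => div_lt_div_of_pos_right
    (strictAntiOn_sq_mul_cos_div_sin_sq (pi_div_mem_Ioo hy) (pi_div_mem_Ioo hx)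
      (div_lt_div_of_pos_left pi_pos (zero_lt_one.trans hx) hxy)) pi_pos

theorem strictAntiOn_add_comp_const_sub_of_strictMonoOn_deriv {g g' : ℝ → ℝ} {a n : ℝ}
    (hg : ∀ t ∈ Ici a, HasDerivAt g (g' t) t) (hg' : StrictMonoOn g' (Ici a)) :
    StrictAntiOn (fun x => g x + g (n - x)) (Icc a (n / 2)) := by
  have hderiv : ∀ x ∈ Icc a (n / 2),
      HasDerivAt (fun x => g x + g (n - x)) (g' x - g' (n - x)) x := fun x hx =>
    ((hg x hx.1).add ((hg (n - x) (by linarith [hx.1, hx.2] : a ≤ n - x)).comp x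
      ((hasDerivAt_id x).const_sub n))).congr_deriv (by ring)
  refine strictAntiOn_of_hasDerivWithinAt_neg (convex_Icc a (n / 2))
    (fun x hx => (hderiv x hx).continuousAt.continuousWithinAt)
    (fun x hx => (hderiv x (interior_subset hx)).hasDerivWithinAt) (fun x hx => ?_)
  rw [interior_Icc] at hx
  exact sub_neg.2 (hg' hx.1.le (by linarith [hx.1, hx.2] : a ≤ n - x) (by linarith [hx.2]))

theorem csc_sum_decr_general (n : ℝ) :
    StrictAntiOn (fun x : ℝ => 2 * (1 / Real.sin (π / x)) + 2 * (1 / Real.sin (π / (n - x))))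
      (Set.Icc 2 (n / 2)) := by
  have hmono := strictMonoOn_sq_mul_cos_div_sin_sq_pi_div.mono (Ici_subset_Ioi.2 one_lt_two)
  refine strictAntiOn_add_comp_const_sub_of_strictMonoOn_deriv
    (g' := fun t => 2 * ((π / t) ^ 2 * cos (π / t) / sin (π / t) ^ 2 / π)) (fun t ht => ?_)
    (fun _ hx _ hy hxy => mul_lt_mul_of_pos_left (hmono hx hy hxy) two_pos)
  have hsin := (sin_pos_of_mem_Ioo (pi_div_mem_Ioo (one_lt_two.trans_le ht))).ne'
  exact (hasDerivAt_one_div_sin_pi_div hsin).const_mul 2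

theorem csc_sum_decr (n : ℝ) (hn : n > 4) :
    StrictAntiOn (fun x : ℝ => 2 * (1 / Real.sin (π / x)) + 2 * (1 / Real.sin (π / (n - x))))
      (Set.Icc 2 (n / 2)) :=
  csc_sum_decr_general n
end

section
/- The function f(x) = 2·csc(π/x) + 2·cot(π/(n−x)) is decreasing on the interval [2, n−2], for any real n > 4. -/
/-!
Substituting `u = π / x` and `v = π / (n - x)` splits the function as
`2 (csc u - 1/u) + 2 (cot v - 1/v) + 2n/π`. On `(0, π)` the map `csc u - 1/u` is increasing,
because its derivative `1/u² - cos u / sin² u` is positive by `u² cos u < sin² u`, and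
`cot v - 1/v` is decreasing, because `sin v < v`. As `u` decreases and `v` increases with `x`,
both summands decrease.
-/

open Real Set

namespace Real

theorem sq_mul_cos_lt_sin_sq {u : ℝ} (hu₀ : 0 < u) (huπ : u < π) :
    u ^ 2 * cos u < sin u ^ 2 := by
  rcases le_or_gt (cos u) 0 with hcos | hcos
  · exact (mul_nonpos_of_nonneg_of_nonpos (sq_nonneg u) hcos).trans_lt
      (pow_pos (sin_pos_of_pos_of_lt_pi hu₀ huπ) 2)
  have hu : u < π / 2 := by
    by_contra! h
    exact hcos.not_ge (cos_nonpos_of_pi_div_two_le_of_le h (by linarith))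
  have hu2 : u ^ 2 < 6 := by nlinarith [pi_le_four]
  have hcube : 0 ≤ u - u ^ 3 / 6 := by nlinarith
  have hcube_half : 0 ≤ u / 2 - (u / 2) ^ 3 / 6 := by nlinarith
  -- `cos u = 1 - 2 sin² (u/2)` turns the cubic lower bound for `sin` into an upper bound for `cos`
  have hcos_half : cos u = 1 - 2 * sin (u / 2) ^ 2 := by
    rw [← cos_two_mul_eq_one_sub, mul_div_cancel₀ u two_ne_zero]
  calc u ^ 2 * cos u ≤ u ^ 2 * (1 - 2 * (u / 2 - (u / 2) ^ 3 / 6) ^ 2) := by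
        rw [hcos_half]
        gcongr
        exact sin_ge_sub_cube (by positivity)
    _ < (u - u ^ 3 / 6) ^ 2 := by
        have h : (u - u ^ 3 / 6) ^ 2 - u ^ 2 * (1 - 2 * (u / 2 - (u / 2) ^ 3 / 6) ^ 2)
            = 2 / 9 * (u ^ 2 / 4) ^ 2 * ((u ^ 2 / 4 - 2) ^ 2 + 8) := by ring
        have : 0 < 2 / 9 * (u ^ 2 / 4) ^ 2 * ((u ^ 2 / 4 - 2) ^ 2 + 8) := by positivity
        linarith
    _ < sin u ^ 2 := by gcongr; exact sin_gt_sub_cube hu₀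

theorem hasDerivAt_one_div_sin_sub_one_div {u : ℝ} (hu : u ≠ 0) (hsin : sin u ≠ 0) :
    HasDerivAt (fun y => 1 / sin y - 1 / y)
      ((sin u ^ 2 - u ^ 2 * cos u) / (u ^ 2 * sin u ^ 2)) u := by
  simp only [one_div]
  refine (((hasDerivAt_sin u).inv hsin).sub (hasDerivAt_inv hu)).congr_deriv ?_
  field_simp
  ring

theorem hasDerivAt_cot_sub_one_div {u : ℝ} (hu : u ≠ 0) (hsin : sin u ≠ 0) :
    HasDerivAt (fun y => cot y - 1 / y) ((sin u ^ 2 - u ^ 2) / (u ^ 2 * sin u ^ 2)) u := by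
  simp only [cot_eq_cos_div_sin, one_div]
  refine (((hasDerivAt_cos u).div (hasDerivAt_sin u) hsin).sub (hasDerivAt_inv hu)).congr_deriv ?_
  field_simp
  linear_combination (-u ^ 2) * sin_sq_add_cos_sq u

theorem strictMonoOn_one_div_sin_sub_one_div :
    StrictMonoOn (fun u => 1 / sin u - 1 / u) (Ioo 0 π) := by
  have hd (u : ℝ) (hu : u ∈ Ioo 0 π) := hasDerivAt_one_div_sin_sub_one_div hu.1.ne'
    (sin_pos_of_pos_of_lt_pi hu.1 hu.2).ne'
  refine strictMonoOn_of_deriv_pos (convex_Ioo 0 π)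
    (fun u hu => (hd u hu).continuousAt.continuousWithinAt) fun u hu => ?_
  rw [interior_Ioo] at hu
  rw [(hd u hu).deriv]
  exact div_pos (sub_pos.2 (sq_mul_cos_lt_sin_sq hu.1 hu.2))
    (mul_pos (pow_pos hu.1 2) (pow_pos (sin_pos_of_pos_of_lt_pi hu.1 hu.2) 2))

theorem strictAntiOn_cot_sub_one_div : StrictAntiOn (fun u => cot u - 1 / u) (Ioo 0 π) := by
  have hd (u : ℝ) (hu : u ∈ Ioo 0 π) := hasDerivAt_cot_sub_one_div hu.1.ne'
    (sin_pos_of_pos_of_lt_pi hu.1 hu.2).ne'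
  refine strictAntiOn_of_deriv_neg (convex_Ioo 0 π)
    (fun u hu => (hd u hu).continuousAt.continuousWithinAt) fun u hu => ?_
  rw [interior_Ioo] at hu
  rw [(hd u hu).deriv]
  exact div_neg_of_neg_of_pos (sub_neg.2 (sin_sq_lt_sq hu.1.ne'))
    (mul_pos (pow_pos hu.1 2) (pow_pos (sin_pos_of_pos_of_lt_pi hu.1 hu.2) 2))

end Real

theorem csc_cot_sum_decr_general (n : ℝ) :
    StrictAntiOn (fun x : ℝ => 2 * (1 / Real.sin (π / x)) + 2 * Real.cot (π / (n - x)))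
      (Set.Icc 2 (n - 2)) := by
  have hpi_div : StrictAntiOn (π / ·) (Ioi (1 : ℝ)) := fun a ha _ _ hab =>
    div_lt_div_of_pos_left pi_pos (zero_lt_one.trans ha) hab
  have hmaps : MapsTo (π / ·) (Ioi (1 : ℝ)) (Ioo 0 π) := fun x hx =>
    ⟨div_pos pi_pos (zero_lt_one.trans hx), div_lt_self pi_pos hx⟩
  have hcsc := strictMonoOn_one_div_sin_sub_one_div.comp_strictAntiOn hpi_div hmaps
  have hcot := strictAntiOn_cot_sub_one_div.comp hpi_div hmaps
  intro a ha b hb hab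
  have h1 := hcsc (show 1 < a by linarith [ha.1]) (show 1 < b by linarith [hb.1]) hab
  have h2 := hcot (show 1 < n - b by linarith [hb.2]) (show 1 < n - a by linarith [ha.2])
    (by linarith)
  simp only [Function.comp, one_div_div] at h1 h2
  linear_combination 2 * h1 + 2 * h2

theorem csc_cot_sum_decr (n : ℝ) (hn : n > 4) :
    StrictAntiOn (fun x : ℝ => 2 * (1 / Real.sin (π / x)) + 2 * Real.cot (π / (n - x)))
      (Set.Icc 2 (n - 2)) :=
  csc_cot_sum_decr_general n
end

section
/- The function f(x) = (π/x²)·csc²(π/x) is decreasing on the interval [2, n−2], for any real n > 4. -/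
/-!
With `t = π / x` the function is `π⁻¹ (t / sin t)²`. Since `sin` is strictly concave with
`sin 0 = 0`, its secant slope `sin t / t` from the origin strictly decreases on `(0, π]`, and
`t = π / x` strictly decreases in `x`; so `sin t / t` strictly increases in `x ≥ 1`, from `0` at
`x = 1`, and its inverse square strictly decreases.
-/

open Real Set

theorem strictAntiOn_sin_div_self : StrictAntiOn (fun t : ℝ => sin t / t) (Ioc 0 π) := by
  intro s hs t ht hst
  have h := strictConcaveOn_sin_Icc.secant_strict_mono (a := 0) ⟨le_rfl, pi_pos.le⟩
    (Ioc_subset_Icc_self hs) (Ioc_subset_Icc_self ht) hs.1.ne' ht.1.ne' hst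
  simpa only [sin_zero, sub_zero] using h

theorem strictMonoOn_sin_pi_div_div_pi_div :
    StrictMonoOn (fun x : ℝ => sin (π / x) / (π / x)) (Ici 1) := by
  have maps : MapsTo (fun x : ℝ => π / x) (Ici 1) (Ioc 0 π) := fun x (hx : 1 ≤ x) =>
    ⟨by positivity, div_le_self pi_pos.le hx⟩
  refine StrictAntiOn.comp strictAntiOn_sin_div_self (fun a ha b _ hab => ?_) maps
  exact div_lt_div_of_pos_left pi_pos (zero_lt_one.trans_le ha) hab

theorem pi_div_sq_mul_one_div_sin_sq (x : ℝ) :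
    π / x ^ 2 * (1 / sin (π / x)) ^ 2 = π⁻¹ * ((sin (π / x) / (π / x)) ^ 2)⁻¹ := by
  rcases eq_or_ne x 0 with rfl | hx
  · simp
  rw [div_pow (sin (π / x)), inv_div]
  field_simp

theorem csc_sq_over_sq_decr_general (n : ℝ) :
    StrictAntiOn (fun x : ℝ => (π / x ^ 2) * (1 / Real.sin (π / x)) ^ 2)
      (Set.Icc 2 (n - 2)) := by
  intro a ha b hb hab
  have one_le : ∀ {x : ℝ}, x ∈ Icc 2 (n - 2) → x ∈ Ici (1 : ℝ) := fun hx =>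
    le_trans (by norm_num) hx.1
  have hmono := strictMonoOn_sin_pi_div_div_pi_div (one_le ha) (one_le hb) hab
  have hpos : 0 < sin (π / a) / (π / a) := by
    simpa using strictMonoOn_sin_pi_div_div_pi_div (mem_Ici.2 le_rfl) (one_le ha)
      (by linarith [ha.1])
  simp only [pi_div_sq_mul_one_div_sin_sq]
  gcongr

theorem csc_sq_over_sq_decr (n : ℝ) (hn : n > 4) :
    StrictAntiOn (fun x : ℝ => (π / x ^ 2) * (1 / Real.sin (π / x)) ^ 2)
      (Set.Icc 2 (n - 2)) :=
  csc_sq_over_sq_decr_general n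
end

section
/- For every integer n ≥ 6, the inequality 2·csc(2π/(n−2)) + 2·csc(2π/(n−2)) > 2·cot(π/(n−2)) > 2·cot(2π/(n−2)) + 2·cot(2π/(n−2)) holds. -/
/-! With x = π/(n-2) ∈ (0, π/2), the double-angle formulas give
2 csc 2x = cot x + tan x and 2 cot 2x = cot x - tan x, so both inequalities
amount to tan x > 0. -/

open Real

namespace Real

/- This and the next identity hold for every `x`: where `sin x = 0` or `cos x = 0`,
every term is `0` by the `/ 0` convention. -/
theorem two_div_sin_two_mul (x : ℝ) : 2 / sin (2 * x) = cot x + tan x := by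
  rw [sin_two_mul, cot_eq_cos_div_sin, tan_eq_sin_div_cos]
  rcases eq_or_ne (sin x) 0 with hs | hs
  · simp [hs]
  rcases eq_or_ne (cos x) 0 with hc | hc
  · simp [hc]
  field_simp
  linear_combination -sin_sq_add_cos_sq x

theorem two_mul_cot_two_mul (x : ℝ) : 2 * cot (2 * x) = cot x - tan x := by
  rw [cot_eq_cos_div_sin, cot_eq_cos_div_sin, tan_eq_sin_div_cos, sin_two_mul, cos_two_mul']
  rcases eq_or_ne (sin x) 0 with hs | hs
  · simp [hs]
  rcases eq_or_ne (cos x) 0 with hc | hc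
  · simp [hc]
  field_simp

end Real

theorem stmt7 (n : ℤ) (hn : 6 ≤ n) :
    2 * (1 / Real.sin (2 * π / ((n : ℝ) - 2))) + 2 * (1 / Real.sin (2 * π / ((n : ℝ) - 2))) >
      2 * Real.cot (π / ((n : ℝ) - 2)) ∧
    2 * Real.cot (π / ((n : ℝ) - 2)) >
      2 * Real.cot (2 * π / ((n : ℝ) - 2)) + 2 * Real.cot (2 * π / ((n : ℝ) - 2)) := by
  have hm : (4 : ℝ) ≤ (n : ℝ) - 2 := by
    have : (6 : ℝ) ≤ n := by exact_mod_cast hn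
    linarith
  set x := π / ((n : ℝ) - 2)
  have hx_lt : x < π / 2 := by
    apply div_lt_div_of_pos_left pi_pos two_pos
    linarith
  have htan : 0 < tan x := tan_pos_of_pos_of_lt_pi_div_two (div_pos pi_pos (by linarith)) hx_lt
  have h2x : 2 * π / ((n : ℝ) - 2) = 2 * x := mul_div_assoc _ _ _
  have hcsc := two_div_sin_two_mul x
  have hcot := two_mul_cot_two_mul x
  rw [h2x, mul_one_div]
  constructor <;> linarith
end

section
/- For every integer n ≥ 8, the inequality 2·csc(2π/(n−4)) + 2·csc(2π/n) > 2·cot(π/(n−2)) > 2·cot(2π/(n−4)) + 2·cot(2π/n) holds. -/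
/-!
Put `a = 2π/(n-4)`, `b = 2π/n`, `c = π/(n-2)`; these lie in `(0, π)` and `1/a + 1/b = 1/c`.
Since `sin x < x` and `cot x < 1/x` on `(0, π)`, we get
`csc a + csc b > 1/a + 1/b = 1/c > cot c`.
For the other inequality, `x ↦ 1/x - cot x` is increasing on `(0, π)`, its derivative being
`1/sin² x - 1/x² > 0`. As `c < a`, this gives
`cot c > 1/c - 1/a + cot a = 1/b + cot a > cot b + cot a`.
-/

open Real Set

theorem Real.hasDerivAt_cot {x : ℝ} (hx : sin x ≠ 0) :
    HasDerivAt cot (-(sin x ^ 2)⁻¹) x := by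
  have h := (hasDerivAt_cos x).div (hasDerivAt_sin x) hx
  rw [show -sin x * sin x - cos x * cos x = -1 by linear_combination -sin_sq_add_cos_sq x,
    neg_div, one_div] at h
  rwa [show cot = cos / sin from funext cot_eq_cos_div_sin]

theorem Real.cot_lt_inv {x : ℝ} (h0 : 0 < x) (hπ : x < π) : cot x < x⁻¹ := by
  rw [cot_eq_cos_div_sin, div_lt_iff₀ (sin_pos_of_pos_of_lt_pi h0 hπ), inv_mul_eq_div,
    lt_div_iff₀ h0]
  rcases lt_or_ge x (π / 2) with hx | hx
  · have htan := lt_tan h0 hx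
    rw [tan_eq_sin_div_cos, lt_div_iff₀ (cos_pos_of_mem_Ioo ⟨by linarith, hx⟩)] at htan
    linarith
  · nlinarith [cos_nonpos_of_pi_div_two_le_of_le hx (by linarith), sin_pos_of_pos_of_lt_pi h0 hπ]

theorem Real.inv_lt_inv_sin {x : ℝ} (h0 : 0 < x) (hπ : x < π) : x⁻¹ < (sin x)⁻¹ :=
  inv_strictAnti₀ (sin_pos_of_pos_of_lt_pi h0 hπ) (sin_lt h0)

theorem Real.strictMonoOn_inv_sub_cot : StrictMonoOn (fun x => x⁻¹ - cot x) (Ioo 0 π) := by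
  have hderiv : ∀ x ∈ Ioo 0 π,
      HasDerivAt (fun x => x⁻¹ - cot x) ((sin x ^ 2)⁻¹ - (x ^ 2)⁻¹) x := by
    rintro x ⟨h0, hπ⟩
    exact ((hasDerivAt_inv h0.ne').sub
      (hasDerivAt_cot (sin_pos_of_pos_of_lt_pi h0 hπ).ne')).congr_deriv (by ring)
  refine strictMonoOn_of_hasDerivWithinAt_pos (convex_Ioo 0 π)
    (fun x hx => (hderiv x hx).continuousAt.continuousWithinAt)
    (f' := fun x => (sin x ^ 2)⁻¹ - (x ^ 2)⁻¹) ?_ ?_ <;> rw [interior_Ioo]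
  · exact fun x hx => (hderiv x hx).hasDerivWithinAt
  · rintro x ⟨h0, hπ⟩
    have hsin := sin_pos_of_pos_of_lt_pi h0 hπ
    have hsq : sin x ^ 2 < x ^ 2 := pow_lt_pow_left₀ (sin_lt h0) hsin.le two_ne_zero
    exact sub_pos.mpr (inv_strictAnti₀ (by positivity) hsq)

theorem pos_and_lt_of_inv_add_inv_eq_inv {a b c : ℝ} (ha : 0 < a) (hb : 0 < b)
    (habc : a⁻¹ + b⁻¹ = c⁻¹) : 0 < c ∧ c < a := by
  have hc : 0 < c := inv_pos.mp (habc ▸ add_pos (inv_pos.mpr ha) (inv_pos.mpr hb))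
  refine ⟨hc, ?_⟩
  rw [← inv_lt_inv₀ ha hc, ← habc]
  linarith [inv_pos.mpr hb]

section HarmonicTriple

variable {a b c : ℝ} (ha : a ∈ Ioo 0 π) (hb : b ∈ Ioo 0 π) (habc : a⁻¹ + b⁻¹ = c⁻¹)
include ha hb habc

theorem cot_lt_inv_sin_add_inv_sin : cot c < (sin a)⁻¹ + (sin b)⁻¹ := by
  obtain ⟨hc, hca⟩ := pos_and_lt_of_inv_add_inv_eq_inv ha.1 hb.1 habc
  linarith [cot_lt_inv hc (hca.trans ha.2), inv_lt_inv_sin ha.1 ha.2, inv_lt_inv_sin hb.1 hb.2]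

theorem cot_add_cot_lt_cot : cot a + cot b < cot c := by
  obtain ⟨hc, hca⟩ := pos_and_lt_of_inv_add_inv_eq_inv ha.1 hb.1 habc
  linarith [strictMonoOn_inv_sub_cot ⟨hc, hca.trans ha.2⟩ ha hca, cot_lt_inv hb.1 hb.2]

end HarmonicTriple

theorem stmt8 (n : ℤ) (hn : 8 ≤ n) :
    2 * (1 / Real.sin (2 * π / ((n : ℝ) - 4))) + 2 * (1 / Real.sin (2 * π / (n : ℝ))) >
      2 * Real.cot (π / ((n : ℝ) - 2)) ∧
    2 * Real.cot (π / ((n : ℝ) - 2)) >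
      2 * Real.cot (2 * π / ((n : ℝ) - 4)) + 2 * Real.cot (2 * π / (n : ℝ)) := by
  have hN : (8 : ℝ) ≤ n := by exact_mod_cast hn
  have ha : 2 * π / ((n : ℝ) - 4) ∈ Ioo 0 π := by
    refine ⟨div_pos (by positivity) (by linarith), ?_⟩
    rw [div_lt_iff₀ (by linarith)]
    nlinarith [pi_pos]
  have hb : 2 * π / (n : ℝ) ∈ Ioo 0 π := by
    refine ⟨div_pos (by positivity) (by linarith), ?_⟩
    rw [div_lt_iff₀ (by linarith)]
    nlinarith [pi_pos]
  have habc : (2 * π / ((n : ℝ) - 4))⁻¹ + (2 * π / n)⁻¹ = (π / ((n : ℝ) - 2))⁻¹ := by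
    have : (n : ℝ) - 4 ≠ 0 := by linarith
    have : (n : ℝ) - 2 ≠ 0 := by linarith
    have : (n : ℝ) ≠ 0 := by linarith
    field_simp
    ring
  simp only [one_div]
  exact ⟨by linarith [cot_lt_inv_sin_add_inv_sin ha hb habc],
    by linarith [cot_add_cot_lt_cot ha hb habc]⟩
end

section
/- For every integer n ≥ 22, the inequality 2·cot(π/6) + 2·cot(π/(n−6)) > 2·csc(π/2) + 2·csc(π/(n−4)) > 2·cot(π/4) + 2·cot(π/(n−4)) holds. -/
/-!
With `x = π / (n - 4)` and `y = π / (n - 6)` we have `1 / x - 1 / y = 2 / π`, and the Laurent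
expansions `csc x = 1 / x + x / 6 + O(x³)`, `cot y = 1 / y - y / 3 - O(y³)` reduce the first
inequality to `x / 6 + y / 3 + O(x³ + y³) < √3 - 1 - 2 / π ≈ 0.0954`. At `n = 22` the left side
is about `0.0948`, so the cubic error terms must be controlled with explicit constants; these come
from the degree-five Taylor bounds for `sin` and `cos`, obtained from `sin_ge_sub_cube` by
two monotonicity arguments. The second inequality is `cot x < csc x` on `(0, π)`.
-/

open Real

namespace Real

theorem cos_le_one_sub_sq_div_two_add_pow_four (x : ℝ) :
    cos x ≤ 1 - x ^ 2 / 2 + x ^ 4 / 24 := by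
  wlog hx : 0 ≤ x
  · simpa [Even.neg_pow (by decide : Even 4)] using this (-x) (by linarith)
  let f (t : ℝ) : ℝ := 1 - t ^ 2 / 2 + t ^ 4 / 24 - cos t
  have hderiv (t : ℝ) : deriv f t = sin t - (t - t ^ 3 / 6) := by
    simp (disch := fun_prop) [f]
    ring
  have hmono : MonotoneOn f (Set.Ici 0) := by
    apply monotoneOn_of_deriv_nonneg (convex_Ici 0) (by fun_prop) (by fun_prop)
    grind [sin_ge_sub_cube, interior_Ici]
  have := hmono (by simp) hx hx
  grind [cos_zero]

theorem sin_le_sub_cube_add_pow_five {x : ℝ} (hx : 0 ≤ x) :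
    sin x ≤ x - x ^ 3 / 6 + x ^ 5 / 120 := by
  let f (t : ℝ) : ℝ := t - t ^ 3 / 6 + t ^ 5 / 120 - sin t
  have hderiv (t : ℝ) : deriv f t = 1 - t ^ 2 / 2 + t ^ 4 / 24 - cos t := by
    simp (disch := fun_prop) [f]
    ring
  have hmono : MonotoneOn f (Set.Ici 0) := by
    apply monotoneOn_of_deriv_nonneg (convex_Ici 0) (by fun_prop) (by fun_prop)
    grind [cos_le_one_sub_sq_div_two_add_pow_four, interior_Ici]
  have := hmono (by simp) hx hx
  grind [sin_zero]

theorem one_div_sin_le {x : ℝ} (hx₀ : 0 < x) (hx₁ : x ≤ 1) :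
    1 / sin x ≤ 1 / x + x / 6 + x ^ 3 / 30 := by
  have hsq : x ^ 2 ≤ 1 := pow_le_one₀ hx₀.le hx₁
  have hlow : 0 < x - x ^ 3 / 6 := by nlinarith
  calc 1 / sin x ≤ 1 / (x - x ^ 3 / 6) := one_div_le_one_div_of_le hlow (sin_ge_sub_cube hx₀.le)
    _ ≤ 1 / x + x / 6 + x ^ 3 / 30 := by
      rw [div_le_iff₀ hlow]
      field_simp
      nlinarith [mul_nonneg (pow_nonneg hx₀.le 4) (sub_nonneg.2 hsq)]

theorem one_div_sub_le_cot {y : ℝ} (hy₀ : 0 < y) (hy₁ : y ≤ 1 / 2) :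
    1 / y - y / 3 - y ^ 3 / 15 ≤ cot y := by
  have hsin : 0 < sin y := sin_pos_of_pos_of_lt_pi hy₀ (by linarith [pi_gt_three])
  have hfactor : 0 ≤ 1 / y - y / 3 - y ^ 3 / 15 := by
    have : 2 ≤ 1 / y := by rw [le_div_iff₀ hy₀]; linarith
    nlinarith [pow_le_pow_left₀ hy₀.le hy₁ 3]
  rw [cot_eq_cos_div_sin, le_div_iff₀ hsin]
  calc (1 / y - y / 3 - y ^ 3 / 15) * sin y
      ≤ (1 / y - y / 3 - y ^ 3 / 15) * (y - y ^ 3 / 6 + y ^ 5 / 120) := by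
        gcongr
        exact sin_le_sub_cube_add_pow_five hy₀.le
    _ ≤ 1 - y ^ 2 / 2 := by
        field_simp
        nlinarith [mul_nonneg (pow_nonneg hy₀.le 4) (by nlinarith : (0:ℝ) ≤ 1 - 3 * y ^ 2),
          pow_nonneg hy₀.le 8]
    _ ≤ cos y := one_sub_sq_div_two_le_cos

theorem cot_lt_one_div_sin {x : ℝ} (hx₀ : 0 < x) (hx₁ : x < π) : cot x < 1 / sin x := by
  have hsin : 0 < sin x := sin_pos_of_pos_of_lt_pi hx₀ hx₁
  rw [cot_eq_cos_div_sin]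
  gcongr
  simpa using cos_lt_cos_of_nonneg_of_le_pi le_rfl hx₁.le hx₀

theorem sqrt_three_gt_d7 : (1.7320508 : ℝ) < √3 := by
  rw [lt_sqrt (by norm_num)]; norm_num

end Real

theorem one_add_one_div_sin_lt_sqrt_three_add_cot {n : ℝ} (hn : 22 ≤ n) :
    1 + 1 / sin (π / (n - 4)) < √3 + cot (π / (n - 6)) := by
  set x := π / (n - 4) with hx
  set y := π / (n - 6) with hy
  have hx₀ : 0 < x := div_pos pi_pos (by linarith)
  have hy₀ : 0 < y := div_pos pi_pos (by linarith)
  have hx₁ : x ≤ 0.17454 := by rw [div_le_iff₀ (by linarith)]; nlinarith [pi_lt_d6]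
  have hy₁ : y ≤ 0.19636 := by rw [div_le_iff₀ (by linarith)]; nlinarith [pi_lt_d6]
  have hgap : 1 / x - 1 / y ≤ 0.63662 := by
    rw [hx, hy, one_div_div, one_div_div, ← sub_div, div_le_iff₀ pi_pos]
    linarith [pi_gt_d6]
  have hcsc := one_div_sin_le hx₀ (by linarith)
  have hcot := one_div_sub_le_cot hy₀ (by linarith)
  have hx₃ := pow_le_pow_left₀ hx₀.le hx₁ 3
  have hy₃ := pow_le_pow_left₀ hy₀.le hy₁ 3
  norm_num at hx₃ hy₃
  linarith [sqrt_three_gt_d7]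

theorem stmt9 (n : ℤ) (hn : 22 ≤ n) :
    2 * Real.cot (π / 6) + 2 * Real.cot (π / ((n : ℝ) - 6)) >
      2 * (1 / Real.sin (π / 2)) + 2 * (1 / Real.sin (π / ((n : ℝ) - 4))) ∧
    2 * (1 / Real.sin (π / 2)) + 2 * (1 / Real.sin (π / ((n : ℝ) - 4))) >
      2 * Real.cot (π / 4) + 2 * Real.cot (π / ((n : ℝ) - 4)) := by
  have hn' : (22 : ℝ) ≤ n := by exact_mod_cast hn
  have hcot_pi_div_six : cot (π / 6) = √3 := by
    rw [cot_eq_cos_div_sin, cos_pi_div_six, sin_pi_div_six]; ring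
  have hcot_pi_div_four : cot (π / 4) = 1 := by
    rw [cot_eq_cos_div_sin, cos_pi_div_four, sin_pi_div_four, div_self (by positivity)]
  rw [hcot_pi_div_six, hcot_pi_div_four, sin_pi_div_two]
  have hcsc_lt := one_add_one_div_sin_lt_sqrt_three_add_cot hn'
  have hcot_lt : cot (π / (n - 4)) < 1 / sin (π / (n - 4)) :=
    cot_lt_one_div_sin (div_pos pi_pos (by linarith))
      (div_lt_self pi_pos (by linarith))
  constructor <;> linarith
end

section
/- Let n > 4 be even. Among all pairs (ε₁, m; ε₂, n−m) with m even, 2 ≤ m ≤ n−2, and signs ε_i ∈ {+, −}, the quantity E(ε₁, m) + E(ε₂, n−m) is maximized by the pair of negative cycles (−, 2) and (−, n−2), where E(+, k) = 2·cot(π/k) and E(−, k) = 2·csc(π/k). That is, for all even m with 2 ≤ m ≤ n−2 and all sign choices, E(ε₁, m) + E(ε₂, n−m) ≤ 2·csc(π/2) + 2·csc(π/(n−2)) = 2 + 2·csc(π/(n−2)). -/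
/-!
Since `cot ≤ csc` on `(0, π)`, it suffices to treat negative cycles, i.e. to show
`csc (π / a) + csc (π / b) ≤ csc (π / 2) + csc (π / (a + b - 2))`, which is trivial when
`a = 2` or `b = 2`. When `a, b ≥ 4`, the bounds `1 / θ ≤ csc θ ≤ 1 / θ + θ / 5` (for `0 < θ ≤ 1`,
the upper one from `sin θ > θ - θ³ / 6`) make the linear parts `a / π + b / π` cancel against
`(a + b - 2) / π` up to `2 / π`, and the remaining error `(π / 5) (1 / a + 1 / b) ≤ π / 10` is
below `1 - 2 / π`.
-/

open Real

/-- Iota energy of a directed even cycle of length `k`: sign `true` is positive. -/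
noncomputable def iotaE (ε : Bool) (k : ℝ) : ℝ :=
  if ε then 2 * Real.cot (π / k) else 2 * (1 / Real.sin (π / k))

lemma one_div_le_one_div_sin {θ : ℝ} (h0 : 0 < θ) (hπ : θ < π) : 1 / θ ≤ 1 / sin θ :=
  one_div_le_one_div_of_le (sin_pos_of_pos_of_lt_pi h0 hπ) (sin_lt h0).le

lemma one_div_sin_le_one_div_add_div_five {θ : ℝ} (h0 : 0 < θ) (h1 : θ ≤ 1) :
    1 / sin θ ≤ 1 / θ + θ / 5 := by
  have hsin : θ - θ ^ 3 / 6 < sin θ := sin_gt_sub_cube h0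
  have hcube : 0 < θ - θ ^ 3 / 6 := by nlinarith [pow_pos h0 3, mul_le_mul_of_nonneg_left h1 h0.le]
  rw [div_le_iff₀ (hcube.trans hsin)]
  calc (1 : ℝ) ≤ (1 / θ + θ / 5) * (θ - θ ^ 3 / 6) := by
        rw [← sub_nonneg]
        have : (1 / θ + θ / 5) * (θ - θ ^ 3 / 6) - 1 = θ ^ 2 * (1 - θ ^ 2) / 30 := by
          field_simp
          ring
        rw [this]
        have : θ ^ 2 ≤ 1 := pow_le_one₀ h0.le h1
        positivity
    _ ≤ (1 / θ + θ / 5) * sin θ := by gcongr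

lemma one_div_sin_pi_div_add_le {a b : ℝ} (ha : 4 ≤ a) (hb : 4 ≤ b) :
    1 / sin (π / a) + 1 / sin (π / b) ≤ 1 + 1 / sin (π / (a + b - 2)) := by
  have hπ3 := pi_gt_three
  have hπ4 := pi_lt_four
  have hθ_le_one {x : ℝ} (hx : 4 ≤ x) : π / x ≤ 1 := by
    rw [div_le_one₀ (by linarith)]
    linarith
  have hua := one_div_sin_le_one_div_add_div_five (by positivity) (hθ_le_one ha)
  have hub := one_div_sin_le_one_div_add_div_five (by positivity) (hθ_le_one hb)
  have hl := one_div_le_one_div_sin (θ := π / (a + b - 2)) (by apply div_pos <;> linarith)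
    (div_lt_self pi_pos (by linarith))
  simp only [one_div_div] at hua hub hl
  have hinv : π / a + π / b ≤ π / 2 := by
    have : π / a ≤ π / 4 := div_le_div_of_nonneg_left pi_pos.le (by norm_num) ha
    have : π / b ≤ π / 4 := div_le_div_of_nonneg_left pi_pos.le (by norm_num) hb
    linarith
  have hsplit : (a + b - 2) / π = a / π + b / π - 2 / π := by ring
  -- `π² - 10π + 20 ≤ 0` on `[3, 4]`
  have hπ : π / 10 + 2 / π ≤ 1 := by
    rw [← sub_nonneg]
    have : 1 - (π / 10 + 2 / π) = -(π ^ 2 - 10 * π + 20) / (10 * π) := by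
      field_simp
      ring
    rw [this]
    apply div_nonneg _ (by positivity)
    nlinarith
  linarith

lemma iotaE_le {k : ℝ} (hk : 1 < k) (ε : Bool) : iotaE ε k ≤ 2 * (1 / sin (π / k)) := by
  have h0 : 0 < π / k := div_pos pi_pos (by linarith)
  have hs : 0 < sin (π / k) := sin_pos_of_pos_of_lt_pi h0 (div_lt_self pi_pos hk)
  cases ε
  · simp [iotaE]
  · simp only [iotaE, if_true, cot_eq_cos_div_sin]
    gcongr
    exact cos_le_one _

lemma iotaE_add_iotaE_le {a b : ℝ} (ha : a = 2 ∨ 4 ≤ a) (hb : b = 2 ∨ 4 ≤ b) (ε₁ ε₂ : Bool) :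
    iotaE ε₁ a + iotaE ε₂ b ≤ 2 + 2 * (1 / sin (π / (a + b - 2))) := by
  have one_lt {x : ℝ} (hx : x = 2 ∨ 4 ≤ x) : 1 < x := by rcases hx with rfl | hx <;> linarith
  have hcsc : 1 / sin (π / a) + 1 / sin (π / b) ≤ 1 + 1 / sin (π / (a + b - 2)) := by
    rcases ha with rfl | ha
    · simp
    rcases hb with rfl | hb
    · simp [add_comm]
    exact one_div_sin_pi_div_add_le ha hb
  linarith [iotaE_le (one_lt ha) ε₁, iotaE_le (one_lt hb) ε₂]

lemma Int.cast_eq_two_or_four_le_of_even {m : ℤ} (hm : Even m) (h2 : 2 ≤ m) :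
    (m : ℝ) = 2 ∨ 4 ≤ (m : ℝ) := by
  obtain ⟨j, rfl⟩ := hm
  have : j + j = 2 ∨ 4 ≤ j + j := by omega
  exact_mod_cast this

theorem stmt15_general (n : ℤ) (hne : Even n)
    (m : ℤ) (hme : Even m) (h2 : 2 ≤ m) (hub : m ≤ n - 2) (ε₁ ε₂ : Bool) :
    iotaE ε₁ (m : ℝ) + iotaE ε₂ ((n : ℝ) - (m : ℝ)) ≤ 2 + 2 * (1 / Real.sin (π / ((n : ℝ) - 2))) := by
  have hm := Int.cast_eq_two_or_four_le_of_even hme h2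
  have hnm := Int.cast_eq_two_or_four_le_of_even (hne.sub hme) (by omega)
  push_cast at hnm
  simpa using iotaE_add_iotaE_le hm hnm ε₁ ε₂

theorem stmt15 (n : ℤ) (hne : Even n) (hn : 4 < n)
    (m : ℤ) (hme : Even m) (h2 : 2 ≤ m) (hub : m ≤ n - 2) (ε₁ ε₂ : Bool) :
    iotaE ε₁ (m : ℝ) + iotaE ε₂ ((n : ℝ) - (m : ℝ)) ≤ 2 + 2 * (1 / Real.sin (π / ((n : ℝ) - 2))) :=
  stmt15_general n hne m hme h2 hub ε₁ ε₂
end
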